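/- Let p be a prime not dividing a squarefree integer d < 0, and let 𝒪 be the ring of integers of ℚ(√d), assumed to have (p) inert. Let R = 𝒪/(pⁿ) with conjugation σ. Then the set of σ-fixed points of ℙ¹(R) (under σ(x:y) = (σx : σy)) is in bijection with ℙ¹(ℤ/pⁿℤ), and hence has cardinality pⁿ + pⁿ⁻¹. -/

import Mathlib

set_option synthInstance.maxHeartbeats 1000000
set_option maxHeartbeats 1000000

open NumberField

/-- A pair `(x, y) ∈ R²` is unimodular if it generates `R` as an `R`-module. -/
def IsUnimodularPair {R : Type*} [CommRing R] (v : R × R) : Prop :=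
  ∃ a b : R, a * v.1 + b * v.2 = 1

/-- The equivalence relation `(x, y) ~ (u·x, u·y)` for a unit `u` on unimodular pairs. -/
def unimodSetoid (R : Type*) [CommRing R] : Setoid {v : R × R // IsUnimodularPair v} where
  r v w := ∃ u : Rˣ, (u : R) * v.1.1 = w.1.1 ∧ (u : R) * v.1.2 = w.1.2
  iseqv := by
    constructor
    · exact fun v => ⟨1, by simp, by simp⟩
    · rintro v w ⟨u, h1, h2⟩
      exact ⟨u⁻¹, by rw [← h1, ← mul_assoc, Units.inv_mul, one_mul],
        by rw [← h2, ← mul_assoc, Units.inv_mul, one_mul]⟩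
    · rintro v w x ⟨u, h1, h2⟩ ⟨u', h1', h2'⟩
      exact ⟨u' * u, by rw [Units.val_mul, mul_assoc, h1, h1'],
        by rw [Units.val_mul, mul_assoc, h2, h2']⟩

/-- The projective line `ℙ¹(R)` over a commutative ring `R`. -/
def ProjLine (R : Type*) [CommRing R] := Quotient (unimodSetoid R)

/-- The action of a ring automorphism `f` of `R` on `ℙ¹(R)`, `(x : y) ↦ (f x : f y)`. -/
def ProjLine.map {R : Type*} [CommRing R] (f : R ≃+* R) : ProjLine R → ProjLine R :=
  Quotient.map
    (fun v => ⟨(f v.1.1, f v.1.2), by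
      obtain ⟨a, b, h⟩ := v.2
      exact ⟨f a, f b, by
        simp only [IsUnimodularPair, ← map_mul, ← map_add]
        rw [h, map_one]⟩⟩)
    (by
      rintro v w ⟨u, h1, h2⟩
      refine ⟨Units.map ((f : R →+* R) : R →* R) u, ?_, ?_⟩ <;>
        simp only [Units.coe_map, MonoidHom.coe_coe, RingHom.coe_coe, ← map_mul] <;>
        [rw [h1]; rw [h2]])

/-!
Over a local ring `S` every point of `ℙ¹(S)` is uniquely `(x : 1)` or `(1 : z)` with `z` a
nonunit, and an automorphism `f` acts on these coordinates. Hence if `T ↪ S` is the fixed ring of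
`f`, then `ℙ¹(S)^f ≅ ℙ¹(T)`. Here `S = 𝒪/pⁿ` is local since `(p)` is maximal, and its
`σ`-fixed ring is `ℤ/pⁿ`: if `σ a ≡ a (mod pⁿ)`, then `2a ≡ t` with `t = a + σ a ∈ ℤ`, which
settles odd `p`; for `p = 2` write `a = s - 2ⁿ⁻¹ w` with `σ w = -w`, so that `w² = e ∈ ℤ` and
`(w - e)² ≡ e (e + 1) ≡ 0 (mod 2)` gives `w ≡ e`. Finally `ℙ¹(ℤ/pⁿ)` has `pⁿ` points
`(x : 1)` and, by Euler's totient, `pⁿ - φ(pⁿ) = pⁿ⁻¹` points `(1 : z)`.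
-/

lemma IsUnimodularPair.map {S S' : Type*} [CommRing S] [CommRing S'] {v : S × S}
    (hv : IsUnimodularPair v) (f : S →+* S') : IsUnimodularPair (f v.1, f v.2) := by
  obtain ⟨a, b, h⟩ := hv
  exact ⟨f a, f b, by simp only [← map_mul, ← map_add, h, map_one]⟩

namespace ProjLine

variable {S : Type*} [CommRing S]

def mk (v : S × S) (hv : IsUnimodularPair v) : ProjLine S := Quotient.mk (unimodSetoid S) ⟨v, hv⟩

lemma mk_eq_mk_iff {v w : S × S} {hv : IsUnimodularPair v} {hw : IsUnimodularPair w} :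
    mk v hv = mk w hw ↔ ∃ u : Sˣ, u * v.1 = w.1 ∧ u * v.2 = w.2 :=
  Quotient.eq

lemma map_mk (f : S ≃+* S) (v : S × S) (hv : IsUnimodularPair v) :
    map f (mk v hv) = mk (f v.1, f v.2) (hv.map f.toRingHom) :=
  rfl

def affine (x : S) : ProjLine S := mk (x, 1) (show IsUnimodularPair (x, 1) from ⟨0, 1, by ring⟩)

def nearInfty (z : S) : ProjLine S := mk (1, z) (show IsUnimodularPair (1, z) from ⟨1, 0, by ring⟩)

lemma affine_injective : Function.Injective (affine (S := S)) := by
  intro x y h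
  obtain ⟨u, hx, hu⟩ := mk_eq_mk_iff.1 h
  simpa [Units.val_eq_one.1 (by simpa using hu)] using hx

lemma nearInfty_injective : Function.Injective (nearInfty (S := S)) := by
  intro z w h
  obtain ⟨u, hu, hz⟩ := mk_eq_mk_iff.1 h
  simpa [Units.val_eq_one.1 (by simpa using hu)] using hz

lemma affine_ne_nearInfty (x : S) {z : S} (hz : ¬IsUnit z) : affine x ≠ nearInfty z := by
  intro h
  obtain ⟨u, -, hu⟩ := mk_eq_mk_iff.1 h
  exact hz ⟨u, by simpa using hu⟩

lemma map_affine (f : S ≃+* S) (x : S) : map f (affine x) = affine (f x) := by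
  rw [affine, map_mk]
  simp only [map_one, affine]

lemma map_nearInfty (f : S ≃+* S) (z : S) : map f (nearInfty z) = nearInfty (f z) := by
  rw [nearInfty, map_mk]
  simp only [map_one, nearInfty]

lemma map_affine_eq_self_iff (f : S ≃+* S) {x : S} : map f (affine x) = affine x ↔ f x = x := by
  rw [map_affine, affine_injective.eq_iff]

lemma map_nearInfty_eq_self_iff (f : S ≃+* S) {z : S} :
    map f (nearInfty z) = nearInfty z ↔ f z = z := by
  rw [map_nearInfty, nearInfty_injective.eq_iff]

/-- In a local ring one of the two coordinates of a unimodular pair is a unit. -/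
lemma exists_eq_affine_or_nearInfty [IsLocalRing S] (q : ProjLine S) :
    (∃ x, q = affine x) ∨ ∃ z, ¬IsUnit z ∧ q = nearInfty z := by
  induction q using Quotient.inductionOn with | h v => ?_
  obtain ⟨⟨x, y⟩, a, b, hab⟩ := v
  by_cases hy : IsUnit y
  · refine .inl ⟨x * ↑hy.unit⁻¹, mk_eq_mk_iff.2 ⟨hy.unit⁻¹, mul_comm _ _, hy.val_inv_mul⟩⟩
  have hx : IsUnit x := by
    rcases IsLocalRing.isUnit_or_isUnit_of_add_one hab with h | h
    · exact isUnit_of_mul_isUnit_right h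
    · exact absurd (isUnit_of_mul_isUnit_right h) hy
  refine .inr ⟨↑hx.unit⁻¹ * y, fun h => hy ?_, mk_eq_mk_iff.2 ⟨hx.unit⁻¹, hx.val_inv_mul, rfl⟩⟩
  simpa [← mul_assoc] using hx.mul h

def ofSum : S ⊕ {z : S // ¬IsUnit z} → ProjLine S :=
  Sum.elim affine (nearInfty ∘ Subtype.val)

lemma ofSum_bijective [IsLocalRing S] : Function.Bijective (ofSum (S := S)) := by
  refine ⟨?_, fun q => ?_⟩
  · rintro (x | ⟨z, hz⟩) (y | ⟨w, hw⟩) h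
    · exact congrArg Sum.inl (affine_injective h)
    · exact absurd h (affine_ne_nearInfty x hw)
    · exact absurd h.symm (affine_ne_nearInfty y hz)
    · exact congrArg Sum.inr (Subtype.ext (nearInfty_injective h))
  · rcases exists_eq_affine_or_nearInfty q with ⟨x, rfl⟩ | ⟨z, hz, rfl⟩
    exacts [⟨.inl x, rfl⟩, ⟨.inr ⟨z, hz⟩, rfl⟩]

noncomputable def equivSum [IsLocalRing S] : S ⊕ {z : S // ¬IsUnit z} ≃ ProjLine S :=
  Equiv.ofBijective ofSum ofSum_bijective

lemma card_eq [IsLocalRing S] [Finite S] :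
    Nat.card (ProjLine S) = Nat.card S + Nat.card {z : S // ¬IsUnit z} := by
  rw [← Nat.card_sum, Nat.card_congr equivSum]

section FixedPoints

variable {T : Type*} [CommRing T] (f : S ≃+* S) {φ : T →+* S}

/-- The inverse of an `f`-fixed unit is `f`-fixed, hence comes from `T`. -/
lemma isLocalHom_of_range_eq_fixed (hφ : Function.Injective φ)
    (hfix : ∀ x, f x = x ↔ x ∈ Set.range φ) : IsLocalHom φ := by
  refine ⟨fun t ⟨u, hu⟩ => ?_⟩
  have hfu : f u = u := by rw [hu]; exact (hfix _).2 ⟨t, rfl⟩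
  have hfv : f ↑u⁻¹ * u = 1 := by rw [← hfu, ← map_mul, Units.inv_mul, map_one]
  obtain ⟨s, hs⟩ := (hfix (↑u⁻¹ : S)).1 <| by
    linear_combination (-f ↑u⁻¹) * u.mul_inv + ↑u⁻¹ * hfv
  exact IsUnit.of_mul_eq_one s (hφ (by rw [map_mul, map_one, hs, ← hu, Units.mul_inv]))

noncomputable def fixedPointsEquiv [IsLocalRing S] (hφ : Function.Injective φ)
    (hfix : ∀ x, f x = x ↔ x ∈ Set.range φ) : {q : ProjLine S // map f q = q} ≃ ProjLine T := by
  have := isLocalHom_of_range_eq_fixed f hφ hfix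
  have := φ.domain_isLocalRing
  let φ' : {t : T // ¬IsUnit t} → {z : S // ¬IsUnit z} :=
    fun t => ⟨φ t, (isUnit_map_iff φ t.1).not.2 t.2⟩
  have hφ' : Function.Injective φ' := fun t t' h => Subtype.ext (hφ (congrArg Subtype.val h))
  have hfixed (s) : map f (ofSum (Sum.map φ φ' s)) = ofSum (Sum.map φ φ' s) := by
    rcases s with t | t
    · exact (map_affine_eq_self_iff f).2 ((hfix _).2 ⟨t, rfl⟩)
    · exact (map_nearInfty_eq_self_iff f).2 ((hfix _).2 ⟨t, rfl⟩)
  refine (Equiv.ofBijective (fun s => ⟨_, hfixed s⟩) ⟨fun s s' h => ?_, ?_⟩).symm.trans equivSum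
  · exact Sum.map_injective.2 ⟨hφ, hφ'⟩ (ofSum_bijective.1 (congrArg Subtype.val h))
  · rintro ⟨q, hq⟩
    obtain ⟨x | ⟨z, hz⟩, rfl⟩ := ofSum_bijective.2 q
    · obtain ⟨t, rfl⟩ := (hfix x).1 ((map_affine_eq_self_iff f).1 hq)
      exact ⟨.inl t, rfl⟩
    · obtain ⟨t, rfl⟩ := (hfix z).1 ((map_nearInfty_eq_self_iff f).1 hq)
      exact ⟨.inr ⟨t, fun ht => hz (ht.map φ)⟩, rfl⟩

end FixedPoints

end ProjLine

lemma Ideal.isLocalRing_quotient_span_pow {O : Type*} [CommRing O] {π : O}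
    (hπ : (Ideal.span {π}).IsMaximal) {n : ℕ} (hn : n ≠ 0) : IsLocalRing (O ⧸ Ideal.span {π ^ n}) := by
  rw [← Ideal.span_singleton_pow]
  have : Nontrivial (O ⧸ Ideal.span {π} ^ n) := Ideal.Quotient.nontrivial_iff.2 <| by
    simp [Ideal.pow_eq_top_iff, hπ.ne_top, hn]
  refine IsLocalRing.of_nonunits_add fun a b ha hb => ?_
  obtain ⟨a, rfl⟩ := Ideal.Quotient.mk_surjective a
  obtain ⟨b, rfl⟩ := Ideal.Quotient.mk_surjective b
  simp only [mem_nonunits_iff, ← map_add, Ideal.Quotient.isUnit_mk_pow_iff_notMem _ hn,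
    not_not] at ha hb ⊢
  exact add_mem ha hb

lemma ZMod.isLocalRing_prime_pow {p : ℕ} (hp : p.Prime) {n : ℕ} (hn : n ≠ 0) :
    IsLocalRing (ZMod (p ^ n)) := by
  have := Fact.mk hp
  have := Ideal.isLocalRing_quotient_span_pow (Int.ideal_span_isMaximal_of_prime p) hn
  rw [← Nat.cast_pow] at this
  exact (Int.quotientSpanNatEquivZMod (p ^ n)).isLocalRing

lemma ZMod.card_nonunits_prime_pow {p : ℕ} (hp : p.Prime) {n : ℕ} (hn : n ≠ 0) :
    Nat.card {x : ZMod (p ^ n) // ¬IsUnit x} = p ^ (n - 1) := by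
  have := NeZero.of_pos (pow_pos hp.pos n)
  have hunits : Nat.card {x : ZMod (p ^ n) // IsUnit x} = p ^ (n - 1) * (p - 1) := by
    rw [← Nat.totient_prime_pow hp (Nat.pos_of_ne_zero hn), ← ZMod.card_units_eq_totient,
      ← Nat.card_eq_fintype_card]
    exact (Nat.card_congr (Equiv.ofInjective _ Units.val_injective)).symm
  rw [Nat.card_eq_fintype_card, Fintype.card_subtype_compl, ← Nat.card_eq_fintype_card,
    ← Nat.card_eq_fintype_card, hunits, Nat.card_zmod]
  obtain ⟨k, rfl⟩ := Nat.exists_eq_add_one_of_ne_zero hn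
  obtain ⟨r, rfl⟩ := Nat.exists_eq_add_one_of_ne_zero hp.ne_zero
  simp only [add_tsub_cancel_right, pow_succ]
  rw [mul_add_one, Nat.add_sub_cancel_left]

section Conjugation

variable {O : Type*} [CommRing O] [IsDomain O] {σ : O ≃+* O}

lemma intCast_dvd_intCast_iff_of_fixed [CharZero O] (hσ : ∀ x : O, σ x = x ↔ ∃ m : ℤ, x = m)
    {k m : ℤ} : (k : O) ∣ (m : O) ↔ k ∣ m := by
  refine ⟨fun ⟨w, hw⟩ => ?_, fun h => by exact_mod_cast Int.cast_dvd_cast k m h⟩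
  rcases eq_or_ne k 0 with rfl | hk
  · rw [Int.cast_zero, zero_mul, Int.cast_eq_zero] at hw
    rw [hw]
  have hσw : σ w = w := by
    have := congrArg σ hw
    rw [map_intCast, map_mul, map_intCast] at this
    exact mul_left_cancel₀ (Int.cast_ne_zero.2 hk) (this.symm.trans hw)
  obtain ⟨t, rfl⟩ := (hσ w).1 hσw
  exact ⟨t, by exact_mod_cast hw⟩

lemma exists_add_conj_eq_intCast (hσ : ∀ x : O, σ x = x ↔ ∃ m : ℤ, x = m)
    (hquad : ∀ a : O, ∃ b c : ℤ, a ^ 2 = b * a + c) (a : O) : ∃ t : ℤ, a + σ a = t := by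
  by_cases hfix : σ a = a
  · obtain ⟨m, rfl⟩ := (hσ a).1 hfix
    exact ⟨2 * m, by push_cast; rw [map_intCast]; ring⟩
  obtain ⟨b, c, hbc⟩ := hquad a
  have hbc' : σ a ^ 2 = b * σ a + c := by simpa using congrArg σ hbc
  refine ⟨b, ?_⟩
  have : (a - σ a) * (a + σ a - b) = 0 := by linear_combination hbc - hbc'
  rcases mul_eq_zero.1 this with h | h
  · exact absurd (sub_eq_zero.1 h).symm hfix
  · exact sub_eq_zero.1 h

lemma conj_conj (hσ : ∀ x : O, σ x = x ↔ ∃ m : ℤ, x = m)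
    (hquad : ∀ a : O, ∃ b c : ℤ, a ^ 2 = b * a + c) (a : O) : σ (σ a) = a := by
  obtain ⟨t, ht⟩ := exists_add_conj_eq_intCast hσ hquad a
  have := congrArg σ ht
  rw [map_add, map_intCast, ← ht] at this
  linear_combination this

lemma exists_intCast_sub_dvd_of_isCoprime_two (hσ : ∀ x : O, σ x = x ↔ ∃ m : ℤ, x = m)
    (hquad : ∀ a : O, ∃ b c : ℤ, a ^ 2 = b * a + c) {q : ℤ} (hq : IsCoprime 2 q) {a : O}
    (h : (q : O) ∣ σ a - a) : ∃ m : ℤ, (q : O) ∣ a - m := by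
  obtain ⟨t, ht⟩ := exists_add_conj_eq_intCast hσ hquad a
  obtain ⟨w, hw⟩ := h
  obtain ⟨u, v, huv⟩ := hq
  have huv' : (u : O) * 2 + v * q = 1 := by exact_mod_cast congrArg (Int.cast : ℤ → O) huv
  refine ⟨u * t, v * a - u * w, ?_⟩
  push_cast
  linear_combination u * ht - u * hw - a * huv'

lemma exists_intCast_sub_two_pow_dvd [CharZero O] (hσ : ∀ x : O, σ x = x ↔ ∃ m : ℤ, x = m)
    (hquad : ∀ a : O, ∃ b c : ℤ, a ^ 2 = b * a + c) (h2 : Prime (2 : O)) {n : ℕ} {a : O}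
    (h : (2 : O) ^ n ∣ σ a - a) : ∃ m : ℤ, (2 : O) ^ n ∣ a - m := by
  cases n with
  | zero => exact ⟨0, by simp⟩
  | succ n => ?_
  obtain ⟨w, hw⟩ := h
  have hσw : σ w = -w := by
    have := congrArg σ hw
    rw [map_sub, conj_conj hσ hquad, map_mul, map_pow, map_ofNat] at this
    exact mul_left_cancel₀ (pow_ne_zero (n + 1) two_ne_zero) (by linear_combination -this - hw)
  obtain ⟨t, ht⟩ := exists_add_conj_eq_intCast hσ hquad a
  obtain ⟨s, rfl⟩ : (2 : ℤ) ∣ t := (intCast_dvd_intCast_iff_of_fixed hσ).1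
    ⟨a + 2 ^ n * w, by push_cast; linear_combination -ht + hw⟩
  have ha : a = s - 2 ^ n * w :=
    mul_left_cancel₀ two_ne_zero (by push_cast at ht; linear_combination ht - hw)
  obtain ⟨e, he⟩ := (hσ (w ^ 2)).1 (by rw [map_pow, hσw, neg_sq])
  obtain ⟨k, hk⟩ := Int.even_mul_succ_self e
  have hk' : (e : O) * (e + 1) = k + k := by exact_mod_cast congrArg (Int.cast : ℤ → O) hk
  obtain ⟨v, hv⟩ := h2.dvd_of_dvd_pow (show (2 : O) ∣ (w - e) ^ 2 from
    ⟨k - e * w, by linear_combination he + hk'⟩)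
  refine ⟨s - 2 ^ n * e, -v, ?_⟩
  push_cast
  linear_combination ha - 2 ^ n * hv

lemma exists_intCast_sub_prime_pow_dvd [CharZero O] (hσ : ∀ x : O, σ x = x ↔ ∃ m : ℤ, x = m)
    (hquad : ∀ a : O, ∃ b c : ℤ, a ^ 2 = b * a + c) {p : ℕ} (hp : p.Prime) (hpO : Prime (p : O))
    (n : ℕ) {a : O} (h : (p : O) ^ n ∣ σ a - a) : ∃ m : ℤ, (p : O) ^ n ∣ a - m := by
  rcases eq_or_ne p 2 with rfl | hp2
  · exact exists_intCast_sub_two_pow_dvd hσ hquad (by exact_mod_cast hpO) (by exact_mod_cast h)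
  have hq : IsCoprime (2 : ℤ) ((p : ℤ) ^ n) := by
    exact_mod_cast Nat.isCoprime_iff_coprime.2
      (((Nat.coprime_primes Nat.prime_two hp).2 hp2.symm).pow_right n)
  exact_mod_cast exists_intCast_sub_dvd_of_isCoprime_two hσ hquad hq (by exact_mod_cast h)

lemma charP_quotient_span_pow [CharZero O] (hσ : ∀ x : O, σ x = x ↔ ∃ m : ℤ, x = m) (p n : ℕ) :
    CharP (O ⧸ Ideal.span {(p : O) ^ n}) (p ^ n) := by
  refine ⟨fun m => ?_⟩
  rw [← map_natCast (Ideal.Quotient.mk _), Ideal.Quotient.eq_zero_iff_mem,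
    Ideal.mem_span_singleton, ← Int.natCast_dvd_natCast, ← intCast_dvd_intCast_iff_of_fixed hσ]
  push_cast
  rfl

end Conjugation

lemma Ideal.Quotient.fixed_iff_exists_intCast {O : Type*} [CommRing O] {σ : O ≃+* O}
    {I : Ideal O} (hI : ∀ a, σ a - a ∈ I → ∃ m : ℤ, a - m ∈ I) (τ : O ⧸ I ≃+* O ⧸ I)
    (hτ : ∀ a, τ (Ideal.Quotient.mk I a) = Ideal.Quotient.mk I (σ a)) (x : O ⧸ I) :
    τ x = x ↔ ∃ m : ℤ, (m : O ⧸ I) = x := by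
  refine ⟨fun hx => ?_, fun ⟨m, hm⟩ => hm ▸ map_intCast τ m⟩
  obtain ⟨a, rfl⟩ := Ideal.Quotient.mk_surjective x
  rw [hτ, Ideal.Quotient.eq] at hx
  obtain ⟨m, hm⟩ := hI a hx
  refine ⟨m, ?_⟩
  rw [← map_intCast (Ideal.Quotient.mk I), Ideal.Quotient.eq, ← neg_mem_iff, neg_sub]
  exact hm

lemma ZMod.mem_range_castHom_iff {R : Type*} [Ring R] {q : ℕ} [CharP R q] (x : R) :
    x ∈ Set.range (ZMod.castHom (dvd_refl q) R) ↔ ∃ m : ℤ, (m : R) = x := by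
  refine ⟨fun ⟨w, hw⟩ => ?_, fun ⟨m, hm⟩ => ⟨m, by rw [map_intCast, hm]⟩⟩
  obtain ⟨m, rfl⟩ := ZMod.intCast_surjective w
  exact ⟨m, by rw [← hw, map_intCast]⟩

lemma NumberField.RingOfIntegers.exists_sq_eq_mul_add {K : Type*} [Field K] [NumberField K]
    (hdeg : Module.finrank ℚ K = 2) (a : 𝓞 K) : ∃ b c : ℤ, a ^ 2 = b * a + c := by
  set P := (Algebra.lmul ℤ (𝓞 K) a).charpoly
  have hP : P.natDegree = 2 := by
    rw [LinearMap.charpoly_natDegree, NumberField.RingOfIntegers.rank, hdeg]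
  have h0 := Algebra.aeval_self_charpoly_lmul (R := ℤ) a
  rw [(LinearMap.charpoly_monic _).as_sum, hP] at h0
  simp only [map_add, map_mul, Polynomial.aeval_X_pow, Polynomial.aeval_X, eq_intCast,
    map_intCast, Finset.sum_range_succ, Finset.sum_range_zero, pow_zero, pow_one, mul_one,
    zero_add] at h0
  exact ⟨-P.coeff 1, -P.coeff 0, by push_cast; linear_combination h0⟩

theorem conj_fixed_points_projLine_general (K : Type*) [Field K] [NumberField K]
    (hdeg : Module.finrank ℚ K = 2)
    (σ : 𝓞 K ≃+* 𝓞 K)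
    (hσ : ∀ x : 𝓞 K, σ x = x ↔ ∃ m : ℤ, x = (m : 𝓞 K))
    (p n : ℕ) (hp : p.Prime) (hn : 1 ≤ n)
    (hinert : (Ideal.span {(p : 𝓞 K)}).IsPrime)
    (σbar : (𝓞 K ⧸ Ideal.span {(p : 𝓞 K) ^ n}) ≃+* (𝓞 K ⧸ Ideal.span {(p : 𝓞 K) ^ n}))
    (hcomm : ∀ x : 𝓞 K,
      σbar (Ideal.Quotient.mk (Ideal.span {(p : 𝓞 K) ^ n}) x) =
        Ideal.Quotient.mk (Ideal.span {(p : 𝓞 K) ^ n}) (σ x)) :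
    Nonempty
      ({x : ProjLine (𝓞 K ⧸ Ideal.span {(p : 𝓞 K) ^ n}) // ProjLine.map σbar x = x} ≃
        ProjLine (ZMod (p ^ n))) ∧
    Nat.card {x : ProjLine (𝓞 K ⧸ Ideal.span {(p : 𝓞 K) ^ n}) // ProjLine.map σbar x = x} =
      p ^ n + p ^ (n - 1) := by
  have hn0 : n ≠ 0 := Nat.one_le_iff_ne_zero.1 hn
  have : NeZero (p ^ n) := ⟨pow_ne_zero n hp.ne_zero⟩
  have hp0 : (p : 𝓞 K) ≠ 0 := Nat.cast_ne_zero.2 hp.ne_zero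
  have hpO : Prime (p : 𝓞 K) := (Ideal.span_singleton_prime hp0).1 hinert
  have hquad := NumberField.RingOfIntegers.exists_sq_eq_mul_add hdeg
  have := Ideal.isLocalRing_quotient_span_pow (hinert.isMaximal (by simpa using hp0)) hn0
  have := charP_quotient_span_pow hσ p n
  have := ZMod.isLocalRing_prime_pow hp hn0
  have hfix (x) : σbar x = x ↔ x ∈ Set.range (ZMod.castHom (dvd_refl (p ^ n)) _) := by
    refine (Ideal.Quotient.fixed_iff_exists_intCast (fun a ha => ?_) σbar hcomm x).trans
      (ZMod.mem_range_castHom_iff x).symm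
    simp only [Ideal.mem_span_singleton] at ha ⊢
    exact exists_intCast_sub_prime_pow_dvd hσ hquad hp hpO n ha
  let e := ProjLine.fixedPointsEquiv σbar (ZMod.castHom_injective _) hfix
  refine ⟨⟨e⟩, ?_⟩
  rw [Nat.card_congr e, ProjLine.card_eq, Nat.card_zmod,
    ZMod.card_nonunits_prime_pow hp hn0]

/-- Let `𝒪` be the ring of integers of an imaginary quadratic field `K = ℚ(√d)` with `d < 0`
squarefree, `p` a prime not dividing `d` with `(p)` inert, `R = 𝒪/(pⁿ)` with conjugation
`σ̄`.  Then the `σ̄`-fixed points of `ℙ¹(R)` are in bijection with `ℙ¹(ℤ/pⁿℤ)`, and hence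
number `pⁿ + pⁿ⁻¹`. -/
theorem conj_fixed_points_projLine (K : Type*) [Field K] [NumberField K]
    (hdeg : Module.finrank ℚ K = 2)
    (him : ∀ v : NumberField.InfinitePlace K, v.IsComplex)
    (σ : 𝓞 K ≃+* 𝓞 K)
    (hσ : ∀ x : 𝓞 K, σ x = x ↔ ∃ m : ℤ, x = (m : 𝓞 K))
    (p n : ℕ) (hp : p.Prime) (hn : 1 ≤ n)
    (hinert : (Ideal.span {(p : 𝓞 K)}).IsPrime)
    (σbar : (𝓞 K ⧸ Ideal.span {(p : 𝓞 K) ^ n}) ≃+* (𝓞 K ⧸ Ideal.span {(p : 𝓞 K) ^ n}))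
    (hcomm : ∀ x : 𝓞 K,
      σbar (Ideal.Quotient.mk (Ideal.span {(p : 𝓞 K) ^ n}) x) =
        Ideal.Quotient.mk (Ideal.span {(p : 𝓞 K) ^ n}) (σ x)) :
    Nonempty
      ({x : ProjLine (𝓞 K ⧸ Ideal.span {(p : 𝓞 K) ^ n}) // ProjLine.map σbar x = x} ≃
        ProjLine (ZMod (p ^ n))) ∧
    Nat.card {x : ProjLine (𝓞 K ⧸ Ideal.span {(p : 𝓞 K) ^ n}) // ProjLine.map σbar x = x} =
      p ^ n + p ^ (n - 1) :=
  conj_fixed_points_projLine_general K hdeg σ hσ p n hp hn hinert σbar hcomm
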